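/- Let (X, d) be a metric space, H : X → [0, +∞] a functional, and Φ : [0,∞) × X → X a semigroup such that for all μ, ν ∈ X with H(μ) < ∞ one has the Evolution Variational Inequality: limsup_{h→0⁺} (d²(Φ_h μ, ν) − d²(μ, ν))/(2h) ≤ H(ν) − H(μ), and such that H(Φ_s μ) ≤ H(μ) for all s ≥ 0. Let a, b, x ∈ X with H(a), H(b), H(x) < ∞, and suppose x minimizes y ↦ d²(a, y) + d²(y, b) over the orbit {Φ_s x : s ≥ 0}, i.e. d²(a, x) + d²(x, b) ≤ d²(a, Φ_s x) + d²(Φ_s x, b) for all s ≥ 0. Then 2 H(x) ≤ H(a) + H(b). -/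

import Mathlib

open Filter Set

/-! The EVI along the flow from `x`, tested against `a` and against `b`, bounds the upper
right derivatives of `d²(Φₕ x, a)` and `d²(Φₕ x, b)` at `h = 0` by `H(a) - H(x)` and
`H(b) - H(x)`. Since `x` minimizes `d²(a, ·) + d²(·, b)` along its orbit, the sum of these
derivatives is nonnegative, whence `0 ≤ (H(a) - H(x)) + (H(b) - H(x))`. -/

theorem le_add_of_limsup_le_of_eventually_le {α : Type*} {l : Filter α} [l.NeBot]
    {u v : α → ℝ} {A B c : ℝ}
    (hu : limsup (fun t => (u t : EReal)) l ≤ A) (hv : limsup (fun t => (v t : EReal)) l ≤ B)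
    (huv : ∀ᶠ t in l, c ≤ u t + v t) : c ≤ A + B := by
  have hc : (c : EReal) ≤ limsup (fun t => (u t : EReal) + v t) l :=
    le_limsup_of_frequently_le (huv.mono fun t ht => by exact_mod_cast ht).frequently
      (by isBoundedDefault)
  have hsplit := EReal.limsup_add_le (f := l) (Or.inr (hv.trans_lt (EReal.coe_lt_top B)).ne)
    (Or.inl (hu.trans_lt (EReal.coe_lt_top A)).ne)
  exact_mod_cast hc.trans (hsplit.trans (add_le_add hu hv))

theorem EReal.coe_ennreal_sub_coe_ennreal {p q : ENNReal} (hp : p ≠ ⊤) (hq : q ≠ ⊤) :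
    (p : EReal) - q = ((p.toReal - q.toReal : ℝ) : EReal) := by
  rw [EReal.coe_sub, EReal.coe_ennreal_toReal hp, EReal.coe_ennreal_toReal hq]

theorem sum_sq_dist_quotient_nonneg {X : Type*} [MetricSpace X] {a b x y : X} {h : ℝ}
    (hh : 0 < h) (hmin : dist a x ^ 2 + dist x b ^ 2 ≤ dist a y ^ 2 + dist y b ^ 2) :
    0 ≤ (dist y a ^ 2 - dist x a ^ 2) / (2 * h) + (dist y b ^ 2 - dist x b ^ 2) / (2 * h) := by
  rw [← add_div, dist_comm y a, dist_comm x a]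
  exact div_nonneg (by linarith) (by positivity)

theorem flow_interchange_general {X : Type*} [MetricSpace X] (H : X → ENNReal) (Φ : ℝ → X → X)
    (hEVI : ∀ μ ν : X, H μ < ⊤ →
      Filter.limsup
        (fun h : ℝ => (((dist (Φ h μ) ν ^ 2 - dist μ ν ^ 2) / (2 * h) : ℝ) : EReal))
        (nhdsWithin 0 (Set.Ioi 0)) ≤ (H ν : EReal) - (H μ : EReal))
    (a b x : X) (ha : H a < ⊤) (hb : H b < ⊤) (hx : H x < ⊤)
    (hopt : ∀ s : ℝ, 0 ≤ s →
      dist a x ^ 2 + dist x b ^ 2 ≤ dist a (Φ s x) ^ 2 + dist (Φ s x) b ^ 2) :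
    2 * H x ≤ H a + H b := by
  have hEVIx : ∀ ν, H ν < ⊤ → limsup
      (fun h : ℝ => (((dist (Φ h x) ν ^ 2 - dist x ν ^ 2) / (2 * h) : ℝ) : EReal))
      (nhdsWithin 0 (Ioi 0)) ≤ (((H ν).toReal - (H x).toReal : ℝ) : EReal) := fun ν hν =>
    EReal.coe_ennreal_sub_coe_ennreal hν.ne hx.ne ▸ hEVI x ν hx
  have hsum : ∀ᶠ h in nhdsWithin (0 : ℝ) (Ioi 0), (0 : ℝ) ≤
      (dist (Φ h x) a ^ 2 - dist x a ^ 2) / (2 * h) +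
        (dist (Φ h x) b ^ 2 - dist x b ^ 2) / (2 * h) := by
    filter_upwards [self_mem_nhdsWithin] with h (hh : 0 < h)
    exact sum_sq_dist_quotient_nonneg hh (hopt h hh.le)
  have key := le_add_of_limsup_le_of_eventually_le (hEVIx a ha) (hEVIx b hb) hsum
  rw [← ENNReal.toReal_le_toReal (by finiteness) (by finiteness), ENNReal.toReal_mul,
    ENNReal.toReal_add ha.ne hb.ne, ENNReal.toReal_ofNat]
  linarith

/-- abstract flow interchange. If `Φ` satisfies the Evolution Variational
Inequality for the functional `H`, decreases `H`, and `x` minimizes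
`y ↦ d²(a,y) + d²(y,b)` over its own `Φ`-orbit, then `2 H(x) ≤ H(a) + H(b)`. -/
theorem flow_interchange {X : Type*} [MetricSpace X] (H : X → ENNReal) (Φ : ℝ → X → X)
    (hEVI : ∀ μ ν : X, H μ < ⊤ →
      Filter.limsup
        (fun h : ℝ => (((dist (Φ h μ) ν ^ 2 - dist μ ν ^ 2) / (2 * h) : ℝ) : EReal))
        (nhdsWithin 0 (Set.Ioi 0)) ≤ (H ν : EReal) - (H μ : EReal))
    (hdec : ∀ s : ℝ, 0 ≤ s → ∀ μ : X, H (Φ s μ) ≤ H μ)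
    (a b x : X) (ha : H a < ⊤) (hb : H b < ⊤) (hx : H x < ⊤)
    (hopt : ∀ s : ℝ, 0 ≤ s →
      dist a x ^ 2 + dist x b ^ 2 ≤ dist a (Φ s x) ^ 2 + dist (Φ s x) b ^ 2) :
    2 * H x ≤ H a + H b :=
  flow_interchange_general H Φ hEVI a b x ha hb hx hopt
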